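/- Under the hypotheses of the previous statement (quadratic eigenpair (λ₁, x₁), projected matrices M̂, D̂, K̂, q̂₁ = Qᴴx₁/‖Qᴴx₁‖), there exist perturbation matrices E_M, E_D, E_K ∈ ℂ^{m×m} with ‖E_M‖ ≤ (1/3)(‖M‖ + ‖D‖/|λ₁| + ‖K‖/|λ₁|²) tan θ₁, ‖E_D‖ ≤ (1/3)(|λ₁|‖M‖ + ‖D‖ + ‖K‖/|λ₁|) tan θ₁, ‖E_K‖ ≤ (1/3)(|λ₁|²‖M‖ + |λ₁|‖D‖ + ‖K‖) tan θ₁, such that (λ₁²(M̂ + E_M) + λ₁(D̂ + E_D) + (K̂ + E_K)) q̂₁ = 0. -/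

import Mathlib

/-!
The residual of the normalized projection `q̂₁` for the projected pencil is
`r = Qᴴ P(λ₁) Q q̂₁`. Since `P(λ₁) x₁ = 0` and `x₁ = Q Qᴴ x₁ + Q⊥ Q⊥ᴴ x₁`, it equals
`-Qᴴ P(λ₁) Q⊥ (Q⊥ᴴ x₁) / ‖Qᴴ x₁‖`, so `‖r‖ ≤ ‖P(λ₁)‖ tan θ₁`. The rank-one matrix `r q̂₁ᴴ` maps
`q̂₁` to `r` and has norm `‖r‖`; writing `-r q̂₁ᴴ = λ₁² E_M + λ₁ E_D + E_K` with a third on each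
term annihilates the residual, and `‖P(λ₁)‖ ≤ |λ₁|² ‖M‖ + |λ₁| ‖D‖ + ‖K‖` gives the bounds.
-/

open Matrix Polynomial

/-- Euclidean norm of a complex vector. -/
noncomputable def vnorm {ι : Type*} [Fintype ι] (x : ι → ℂ) : ℝ :=
  Real.sqrt (∑ i, ‖x i‖ ^ 2)

/-- Spectral norm (operator 2-norm) of a complex matrix. -/
noncomputable def spec {ι κ : Type*} [Fintype ι] [Fintype κ] [DecidableEq κ]
    (A : Matrix ι κ ℂ) : ℝ :=
  ‖LinearMap.toContinuousLinearMap (Matrix.toEuclideanLin A)‖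

/-- Sine of the angle between two vectors: distance from a/‖a‖ to span{b}. -/
noncomputable def sAngle {ι : Type*} [Fintype ι] (a b : ι → ℂ) : ℝ :=
  ⨅ α : ℂ, vnorm ((vnorm a)⁻¹ • a - α • b)

open scoped Matrix.Norms.L2Operator

section vnorm
variable {ι : Type*} [Fintype ι]

lemma vnorm_eq_norm_toLp (x : ι → ℂ) : vnorm x = ‖WithLp.toLp 2 x‖ := by
  rw [EuclideanSpace.norm_eq, vnorm]

lemma vnorm_nonneg (x : ι → ℂ) : 0 ≤ vnorm x :=
  Real.sqrt_nonneg _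

lemma vnorm_neg (x : ι → ℂ) : vnorm (-x) = vnorm x := by
  rw [vnorm_eq_norm_toLp, vnorm_eq_norm_toLp, WithLp.toLp_neg, norm_neg]

lemma vnorm_real_smul (c : ℝ) (x : ι → ℂ) : vnorm (c • x) = |c| * vnorm x := by
  rw [vnorm_eq_norm_toLp, vnorm_eq_norm_toLp, WithLp.toLp_smul, norm_smul, Real.norm_eq_abs]

lemma vnorm_inv_smul_self {x : ι → ℂ} (hx : x ≠ 0) : vnorm ((vnorm x)⁻¹ • x) = 1 := by
  rw [vnorm_eq_norm_toLp, vnorm_eq_norm_toLp, WithLp.toLp_smul]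
  exact norm_smul_inv_norm (by simpa using hx)

lemma star_dotProduct_self (x : ι → ℂ) : star x ⬝ᵥ x = (vnorm x : ℂ) ^ 2 := by
  have h := inner_self_eq_norm_sq_to_K (𝕜 := ℂ) (WithLp.toLp 2 x)
  rw [EuclideanSpace.inner_toLp_toLp, dotProduct_comm] at h
  rw [vnorm_eq_norm_toLp, h]
  rfl

lemma vecMulVec_star_mulVec_of_vnorm_eq_one {κ : Type*} (x : κ → ℂ) {u : ι → ℂ}
    (hu : vnorm u = 1) : vecMulVec x (star u) *ᵥ u = x := by
  rw [vecMulVec_mulVec, op_smul_eq_smul, star_dotProduct_self, hu]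
  simp

end vnorm

section spec
variable {ι κ : Type*} [Fintype ι] [Fintype κ] [DecidableEq κ]

lemma spec_eq_l2_opNorm (A : Matrix ι κ ℂ) : spec A = ‖A‖ := rfl

lemma spec_nonneg (A : Matrix ι κ ℂ) : 0 ≤ spec A :=
  norm_nonneg _

lemma spec_add_le (A B : Matrix ι κ ℂ) : spec (A + B) ≤ spec A + spec B :=
  norm_add_le A B

lemma spec_smul (c : ℂ) (A : Matrix ι κ ℂ) : spec (c • A) = ‖c‖ * spec A :=
  norm_smul c A

lemma spec_mul_le {ν : Type*} [Fintype ν] [DecidableEq ν] (A : Matrix ι κ ℂ)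
    (B : Matrix κ ν ℂ) : spec (A * B) ≤ spec A * spec B :=
  l2_opNorm_mul A B

lemma spec_conjTranspose [DecidableEq ι] (A : Matrix ι κ ℂ) : spec Aᴴ = spec A :=
  l2_opNorm_conjTranspose A

lemma vnorm_mulVec_le (A : Matrix ι κ ℂ) (x : κ → ℂ) : vnorm (A *ᵥ x) ≤ spec A * vnorm x := by
  simpa [vnorm_eq_norm_toLp, spec_eq_l2_opNorm] using A.l2_opNorm_mulVec (WithLp.toLp 2 x)

lemma spec_le_one_of_conjTranspose_mul_self_eq_one {A : Matrix ι κ ℂ} (hA : Aᴴ * A = 1) :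
    spec A ≤ 1 := by
  have h : spec A * spec A ≤ 1 := by
    rw [spec_eq_l2_opNorm, ← l2_opNorm_conjTranspose_mul_self, hA, ← diagonal_one,
      l2_opNorm_diagonal]
    exact (pi_norm_const_le _).trans norm_one.le
  nlinarith [spec_nonneg A]

lemma spec_vecMulVec_star (x : ι → ℂ) (y : κ → ℂ) :
    spec (vecMulVec x (star y)) = vnorm x * vnorm y := by
  rw [spec, vnorm_eq_norm_toLp, vnorm_eq_norm_toLp, ← InnerProductSpace.norm_rankOne (𝕜 := ℂ),
    ← (LinearEquiv.symm_apply_eq _).1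
      (InnerProductSpace.symm_toEuclideanLin_rankOne (WithLp.toLp 2 x) (WithLp.toLp 2 y))]
  rfl

end spec

section quadratic
variable {ι : Type*} [Fintype ι] [DecidableEq ι]

lemma spec_quadratic_le (A₂ A₁ A₀ : Matrix ι ι ℂ) (lam : ℂ) :
    spec (lam ^ 2 • A₂ + lam • A₁ + A₀) ≤ ‖lam‖ ^ 2 * spec A₂ + ‖lam‖ * spec A₁ + spec A₀ := by
  calc spec (lam ^ 2 • A₂ + lam • A₁ + A₀)
      ≤ spec (lam ^ 2 • A₂) + spec (lam • A₁) + spec A₀ := by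
        linarith [spec_add_le (lam ^ 2 • A₂ + lam • A₁) A₀, spec_add_le (lam ^ 2 • A₂) (lam • A₁)]
    _ = ‖lam‖ ^ 2 * spec A₂ + ‖lam‖ * spec A₁ + spec A₀ := by
        rw [spec_smul, spec_smul, norm_pow]

/-- The residual `r` of `(lam, u)` is moved into the coefficients as `-r uᴴ`, a third of it
on each of the three terms. -/
lemma exists_quadratic_backward_error (A₂ A₁ A₀ : Matrix ι ι ℂ) {u : ι → ℂ} (hu : vnorm u = 1)
    {lam : ℂ} (hlam : lam ≠ 0) :
    ∃ E₂ E₁ E₀ : Matrix ι ι ℂ,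
      spec E₂ = vnorm ((lam ^ 2 • A₂ + lam • A₁ + A₀) *ᵥ u) / (3 * ‖lam‖ ^ 2) ∧
      spec E₁ = vnorm ((lam ^ 2 • A₂ + lam • A₁ + A₀) *ᵥ u) / (3 * ‖lam‖) ∧
      spec E₀ = vnorm ((lam ^ 2 • A₂ + lam • A₁ + A₀) *ᵥ u) / 3 ∧
      (lam ^ 2 • (A₂ + E₂) + lam • (A₁ + E₁) + (A₀ + E₀)) *ᵥ u = 0 := by
  set r := (lam ^ 2 • A₂ + lam • A₁ + A₀) *ᵥ u
  set N := vecMulVec r (star u)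
  have hN : spec N = vnorm r := by rw [spec_vecMulVec_star, hu, mul_one]
  refine ⟨(-(3 * lam ^ 2)⁻¹) • N, (-(3 * lam)⁻¹) • N, (-3⁻¹ : ℂ) • N, ?_, ?_, ?_, ?_⟩
  · rw [spec_smul, hN]; simp [div_eq_inv_mul]
  · rw [spec_smul, hN]; simp [div_eq_inv_mul]
  · rw [spec_smul, hN]; simp [div_eq_inv_mul]
  · have hsplit : lam ^ 2 • (A₂ + (-(3 * lam ^ 2)⁻¹) • N) + lam • (A₁ + (-(3 * lam)⁻¹) • N)
        + (A₀ + (-3⁻¹ : ℂ) • N) = (lam ^ 2 • A₂ + lam • A₁ + A₀) - N := by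
      match_scalars <;> field_simp
      ring
    rw [hsplit, sub_mulVec, vecMulVec_star_mulVec_of_vnorm_eq_one r hu, sub_self]

end quadratic

section compression
variable {ι κ κ' : Type*}

lemma conjTranspose_mul_self_eq_one_of_fromCols {R : Type*} [Semiring R] [StarRing R]
    [Fintype ι] [DecidableEq κ] [DecidableEq κ'] {A : Matrix ι κ R} {B : Matrix ι κ' R}
    (h : (fromCols A B)ᴴ * fromCols A B = 1) : Bᴴ * B = 1 := by
  rw [conjTranspose_fromCols_eq_fromRows_conjTranspose, fromRows_mul_fromCols,
    ← fromBlocks_one] at h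
  have h₂₂ := congrArg toBlocks₂₂ h
  rwa [toBlocks_fromBlocks₂₂, toBlocks_fromBlocks₂₂] at h₂₂

lemma mul_conjTranspose_add_mul_conjTranspose_of_fromCols {R : Type*} [Semiring R] [StarRing R]
    [Fintype κ] [Fintype κ'] [DecidableEq ι] {A : Matrix ι κ R} {B : Matrix ι κ' R}
    (h : fromCols A B * (fromCols A B)ᴴ = 1) : A * Aᴴ + B * Bᴴ = 1 := by
  rwa [conjTranspose_fromCols_eq_fromRows_conjTranspose, fromCols_mul_fromRows] at h

variable [Fintype ι] [Fintype κ] [Fintype κ'] [DecidableEq ι] [DecidableEq κ] [DecidableEq κ']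

lemma vnorm_compression_residual_le (P : Matrix ι ι ℂ) {Q : Matrix ι κ ℂ} {Qp : Matrix ι κ' ℂ}
    (hQ : Qᴴ * Q = 1) (hQp : Qpᴴ * Qp = 1) (hcompl : Q * Qᴴ + Qp * Qpᴴ = 1) {x : ι → ℂ}
    (hx : P *ᵥ x = 0) :
    vnorm ((Qᴴ * P * Q) *ᵥ ((vnorm (Qᴴ *ᵥ x))⁻¹ • (Qᴴ *ᵥ x)))
      ≤ spec P * (vnorm (Qpᴴ *ᵥ x) / vnorm (Qᴴ *ᵥ x)) := by
  have hres : (Qᴴ * P * Q) *ᵥ (Qᴴ *ᵥ x) = -((Qᴴ * P * Qp) *ᵥ (Qpᴴ *ᵥ x)) := by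
    have hsplit : Q *ᵥ (Qᴴ *ᵥ x) = x - Qp *ᵥ (Qpᴴ *ᵥ x) := by
      rw [mulVec_mulVec, mulVec_mulVec, eq_sub_of_add_eq hcompl, sub_mulVec, one_mulVec]
    simp only [← mulVec_mulVec]
    rw [hsplit, mulVec_sub, hx, zero_sub, mulVec_neg]
  have hspec : spec (Qᴴ * P * Qp) ≤ spec P :=
    calc spec (Qᴴ * P * Qp) ≤ spec Qᴴ * spec P * spec Qp :=
          (spec_mul_le _ _).trans (mul_le_mul_of_nonneg_right (spec_mul_le _ _) (spec_nonneg _))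
      _ ≤ spec Qᴴ * spec P :=
          mul_le_of_le_one_right (mul_nonneg (spec_nonneg _) (spec_nonneg _))
            (spec_le_one_of_conjTranspose_mul_self_eq_one hQp)
      _ ≤ spec P := mul_le_of_le_one_left (spec_nonneg _)
          (by rw [spec_conjTranspose]; exact spec_le_one_of_conjTranspose_mul_self_eq_one hQ)
  calc vnorm ((Qᴴ * P * Q) *ᵥ ((vnorm (Qᴴ *ᵥ x))⁻¹ • (Qᴴ *ᵥ x)))
      = (vnorm (Qᴴ *ᵥ x))⁻¹ * vnorm ((Qᴴ * P * Qp) *ᵥ (Qpᴴ *ᵥ x)) := by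
        rw [mulVec_smul, vnorm_real_smul, hres, vnorm_neg, abs_inv,
          abs_of_nonneg (vnorm_nonneg _)]
    _ ≤ (vnorm (Qᴴ *ᵥ x))⁻¹ * (spec P * vnorm (Qpᴴ *ᵥ x)) := by
        have := vnorm_nonneg (Qᴴ *ᵥ x)
        gcongr
        exact (vnorm_mulVec_le _ _).trans (mul_le_mul_of_nonneg_right hspec (vnorm_nonneg _))
    _ = spec P * (vnorm (Qpᴴ *ᵥ x) / vnorm (Qᴴ *ᵥ x)) := by ring

end compression

theorem stmt3_general {n m : ℕ} (M D K : Matrix (Fin n) (Fin n) ℂ)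
    (Q : Matrix (Fin n) (Fin m) ℂ) (Qp : Matrix (Fin n) (Fin (n - m)) ℂ)
    (hQ : Qᴴ * Q = 1)
    (hU1 : (Matrix.fromCols Q Qp)ᴴ * Matrix.fromCols Q Qp = 1)
    (hU2 : Matrix.fromCols Q Qp * (Matrix.fromCols Q Qp)ᴴ = 1)
    (lam : ℂ) (x : Fin n → ℂ) (hlam : lam ≠ 0)
    (heig : (lam ^ 2 • M + lam • D + K) *ᵥ x = 0)
    (hq : Qᴴ *ᵥ x ≠ 0) :
    ∃ EM ED EK : Matrix (Fin m) (Fin m) ℂ,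
      spec EM ≤ (1 / 3) * (spec M + spec D / ‖lam‖ +
          spec K / ‖lam‖ ^ 2) * (vnorm (Qpᴴ *ᵥ x) / vnorm (Qᴴ *ᵥ x)) ∧
      spec ED ≤ (1 / 3) * (‖lam‖ * spec M + spec D +
          spec K / ‖lam‖) * (vnorm (Qpᴴ *ᵥ x) / vnorm (Qᴴ *ᵥ x)) ∧
      spec EK ≤ (1 / 3) * (‖lam‖ ^ 2 * spec M + ‖lam‖ * spec D +
          spec K) * (vnorm (Qpᴴ *ᵥ x) / vnorm (Qᴴ *ᵥ x)) ∧
      (lam ^ 2 • (Qᴴ * M * Q + EM) + lam • (Qᴴ * D * Q + ED) + (Qᴴ * K * Q + EK)) *ᵥ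
        ((vnorm (Qᴴ *ᵥ x))⁻¹ • (Qᴴ *ᵥ x)) = 0 := by
  obtain ⟨EM, ED, EK, hEM, hED, hEK, hE⟩ := exists_quadratic_backward_error
    (Qᴴ * M * Q) (Qᴴ * D * Q) (Qᴴ * K * Q) (vnorm_inv_smul_self hq) hlam
  have hcompress : lam ^ 2 • (Qᴴ * M * Q) + lam • (Qᴴ * D * Q) + Qᴴ * K * Q
      = Qᴴ * (lam ^ 2 • M + lam • D + K) * Q := by
    simp only [Matrix.mul_add, Matrix.add_mul, Matrix.mul_smul, Matrix.smul_mul]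
  have hres := (vnorm_compression_residual_le _ hQ
    (conjTranspose_mul_self_eq_one_of_fromCols hU1)
    (mul_conjTranspose_add_mul_conjTranspose_of_fromCols hU2) heig).trans
    (mul_le_mul_of_nonneg_right (spec_quadratic_le M D K lam)
      (div_nonneg (vnorm_nonneg _) (vnorm_nonneg _)))
  rw [hcompress] at hEM hED hEK
  have hlam' : 0 < ‖lam‖ := norm_pos_iff.mpr hlam
  refine ⟨EM, ED, EK, ?_, ?_, ?_, hE⟩
  · rw [hEM]
    refine (div_le_div_of_nonneg_right hres (by positivity)).trans_eq ?_
    field_simp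
  · rw [hED]
    refine (div_le_div_of_nonneg_right hres (by positivity)).trans_eq ?_
    field_simp
  · rw [hEK]
    refine (div_le_div_of_nonneg_right hres (by positivity)).trans_eq ?_
    ring

theorem stmt3 {n m : ℕ} (M D K : Matrix (Fin n) (Fin n) ℂ)
    (Q : Matrix (Fin n) (Fin m) ℂ) (Qp : Matrix (Fin n) (Fin (n - m)) ℂ)
    (hQ : Qᴴ * Q = 1)
    (hU1 : (Matrix.fromCols Q Qp)ᴴ * Matrix.fromCols Q Qp = 1)
    (hU2 : Matrix.fromCols Q Qp * (Matrix.fromCols Q Qp)ᴴ = 1)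
    (lam : ℂ) (x : Fin n → ℂ) (hx : vnorm x = 1) (hlam : lam ≠ 0)
    (heig : (lam ^ 2 • M + lam • D + K) *ᵥ x = 0)
    (hq : Qᴴ *ᵥ x ≠ 0) :
    ∃ EM ED EK : Matrix (Fin m) (Fin m) ℂ,
      spec EM ≤ (1 / 3) * (spec M + spec D / ‖lam‖ +
          spec K / ‖lam‖ ^ 2) * (vnorm (Qpᴴ *ᵥ x) / vnorm (Qᴴ *ᵥ x)) ∧
      spec ED ≤ (1 / 3) * (‖lam‖ * spec M + spec D +
          spec K / ‖lam‖) * (vnorm (Qpᴴ *ᵥ x) / vnorm (Qᴴ *ᵥ x)) ∧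
      spec EK ≤ (1 / 3) * (‖lam‖ ^ 2 * spec M + ‖lam‖ * spec D +
          spec K) * (vnorm (Qpᴴ *ᵥ x) / vnorm (Qᴴ *ᵥ x)) ∧
      (lam ^ 2 • (Qᴴ * M * Q + EM) + lam • (Qᴴ * D * Q + ED) + (Qᴴ * K * Q + EK)) *ᵥ
        ((vnorm (Qᴴ *ᵥ x))⁻¹ • (Qᴴ *ᵥ x)) = 0 :=
  stmt3_general M D K Q Qp hQ hU1 hU2 lam x hlam heig hq
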